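/- arXiv:2302.11312 — 2 statements merged into one kernel-verified Lean document; each statement's English description precedes it below -/
import Mathlib

section
/- (Expectation-shift bound between visitation frequencies.) For any two policies π and π' and any function f : S → ℝ, |Σ_s ρ_π(s) f(s) − Σ_s ρ_{π'}(s) f(s)| ≤ (2γ/(1−γ)) · (max_s |f(s)|) · Σ_s ρ_{π'}(s) · D_TV(π‖π')[s]. -/
/-!
Write `P_π` for the state-transition matrix of `π`, so that `ρ_π = d₀ + γ ρ_π P_π`. Subtracting the
two fixed-point equations gives `ρ_π - ρ_π' = γ ((ρ_π - ρ_π') P_π + ρ_π' (P_π - P_π'))`. Since `P_π`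
is row-stochastic it does not increase the `ℓ¹` norm, and since `ρ_π' ≥ 0` the second term has
`ℓ¹` norm at most `Σ_s ρ_π'(s) ‖P_π(s, ·) - P_π'(s, ·)‖₁ ≤ 2 Σ_s ρ_π'(s) D_TV(π‖π')[s]`. Hence
`(1 - γ) ‖ρ_π - ρ_π'‖₁ ≤ 2 γ Σ_s ρ_π'(s) D_TV(π‖π')[s]`, and Hölder's inequality with `‖f‖_∞`
finishes the proof.
-/

open Finset Matrix

section LinearOrderedField

variable {R : Type*} [Field R] [LinearOrder R] [IsStrictOrderedRing R]
  {m n : Type*} [Fintype m] [Fintype n]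

theorem abs_dotProduct_le_sum_abs_mul {v w : n → R} {C : R} (hw : ∀ i, |w i| ≤ C) :
    |v ⬝ᵥ w| ≤ (∑ i, |v i|) * C := by
  calc |v ⬝ᵥ w| ≤ ∑ i, |v i * w i| := abs_sum_le_sum_abs _ _
    _ ≤ ∑ i, |v i| * C := by
        gcongr with i
        rw [abs_mul]
        exact mul_le_mul_of_nonneg_left (hw i) (abs_nonneg _)
    _ = (∑ i, |v i|) * C := (sum_mul ..).symm

theorem sum_abs_vecMul_le (v : m → R) (K : Matrix m n R) :
    ∑ j, |(v ᵥ* K) j| ≤ ∑ i, |v i| * ∑ j, |K i j| := by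
  calc ∑ j, |(v ᵥ* K) j| ≤ ∑ j, ∑ i, |v i| * |K i j| := by
        gcongr with j
        refine (abs_sum_le_sum_abs _ _).trans_eq ?_
        simp only [abs_mul]
    _ = ∑ i, |v i| * ∑ j, |K i j| := by
        rw [sum_comm]
        simp only [mul_sum]

variable [DecidableEq n] {M N : Matrix n n R} {d ρ ρ' : n → R} {γ : R}

theorem sum_abs_vecMul_le_of_mem_rowStochastic (hM : M ∈ rowStochastic R n) (v : n → R) :
    ∑ j, |(v ᵥ* M) j| ≤ ∑ i, |v i| := by
  refine (sum_abs_vecMul_le v M).trans_eq (sum_congr rfl fun i _ => ?_)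
  simp only [abs_of_nonneg (nonneg_of_mem_rowStochastic hM), sum_row_of_mem_rowStochastic hM,
    mul_one]

theorem nonneg_of_eq_add_mul_vecMul (hM : M ∈ rowStochastic R n) (hd : ∀ i, 0 ≤ d i)
    (hγ0 : 0 ≤ γ) (hγ1 : γ < 1) (hρ : ∀ j, ρ j = d j + γ * (ρ ᵥ* M) j) (i : n) : 0 ≤ ρ i := by
  by_contra! hi
  set S := univ.filter fun j => ρ j < 0
  have hS : ∑ j ∈ S, ρ j < 0 :=
    sum_neg (fun j hj => (mem_filter.1 hj).2) ⟨i, mem_filter.2 ⟨mem_univ i, hi⟩⟩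
  -- Mass flowing into `S` from a state `k` is at least `ρ k` if `k ∈ S`, and nonnegative otherwise.
  have hflow : ∀ k, (if ρ k < 0 then ρ k else 0) ≤ ρ k * ∑ j ∈ S, M k j := by
    intro k
    have h0 : 0 ≤ ∑ j ∈ S, M k j := sum_nonneg fun j _ => nonneg_of_mem_rowStochastic hM
    have h1 : ∑ j ∈ S, M k j ≤ 1 :=
      (sum_le_univ_sum_of_nonneg fun j => nonneg_of_mem_rowStochastic hM).trans_eq
        (sum_row_of_mem_rowStochastic hM k)
    split_ifs with h
    · nlinarith
    · exact mul_nonneg (not_lt.1 h) h0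
  have hsum : ∑ j ∈ S, ρ j = ∑ j ∈ S, d j + γ * ∑ i, ρ i * ∑ j ∈ S, M i j := by
    rw [sum_congr rfl fun j _ => hρ j, sum_add_distrib, ← mul_sum]
    simp only [vecMul, dotProduct, mul_sum]
    rw [sum_comm]
  have hinflow : ∑ j ∈ S, ρ j ≤ ∑ i, ρ i * ∑ j ∈ S, M i j := by
    rw [sum_filter]
    exact sum_le_sum fun k _ => hflow k
  have hdS : 0 ≤ ∑ j ∈ S, d j := sum_nonneg fun j _ => hd j
  nlinarith [mul_le_mul_of_nonneg_left hinflow hγ0]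

theorem sum_abs_sub_le_of_eq_add_mul_vecMul (hM : M ∈ rowStochastic R n)
    (hρ'0 : ∀ i, 0 ≤ ρ' i) (hγ0 : 0 ≤ γ) (hγ1 : γ < 1)
    (hρ : ∀ j, ρ j = d j + γ * (ρ ᵥ* M) j) (hρ' : ∀ j, ρ' j = d j + γ * (ρ' ᵥ* N) j) :
    ∑ i, |ρ i - ρ' i| ≤ γ / (1 - γ) * ∑ i, ρ' i * ∑ j, |M i j - N i j| := by
  set X := ∑ i, |ρ i - ρ' i|
  set C := ∑ i, ρ' i * ∑ j, |M i j - N i j|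
  have hdiff : ∀ j, ρ j - ρ' j = γ * (((ρ - ρ') ᵥ* M) j + (ρ' ᵥ* (M - N)) j) := by
    intro j
    rw [hρ j, hρ' j, sub_vecMul, vecMul_sub]
    simp only [Pi.sub_apply]
    ring
  have hX : X ≤ γ * (X + C) :=
    calc X = γ * ∑ j, |((ρ - ρ') ᵥ* M) j + (ρ' ᵥ* (M - N)) j| := by
          simp only [X, hdiff, abs_mul, abs_of_nonneg hγ0, mul_sum]
      _ ≤ γ * (∑ j, |((ρ - ρ') ᵥ* M) j| + ∑ j, |(ρ' ᵥ* (M - N)) j|) := by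
          rw [← sum_add_distrib]
          gcongr with j
          exact abs_add_le _ _
      _ ≤ γ * (X + C) := by
          gcongr
          · exact sum_abs_vecMul_le_of_mem_rowStochastic hM _
          · refine (sum_abs_vecMul_le _ _).trans_eq ?_
            simp only [C, abs_of_nonneg (hρ'0 _), Matrix.sub_apply]
  rw [div_mul_eq_mul_div, le_div_iff₀ (sub_pos.2 hγ1)]
  linarith

end LinearOrderedField

section PolicyTransition

variable {S A : Type*} [Fintype S] [Fintype A]

def policyTransition (p : S → A → S → ℝ) (π : S → A → ℝ) : Matrix S S ℝ :=
  of fun s s' => ∑ a, π s a * p s a s'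

theorem policyTransition_mem_rowStochastic [DecidableEq S] {p : S → A → S → ℝ} {π : S → A → ℝ}
    (hp0 : ∀ s a s', 0 ≤ p s a s') (hp1 : ∀ s a, ∑ s', p s a s' = 1)
    (hπ0 : ∀ s a, 0 ≤ π s a) (hπ1 : ∀ s, ∑ a, π s a = 1) :
    policyTransition p π ∈ rowStochastic ℝ S := by
  refine mem_rowStochastic_iff_sum.2 ⟨fun s s' => ?_, fun s => ?_⟩
  · exact sum_nonneg fun a _ => mul_nonneg (hπ0 s a) (hp0 s a s')
  · simp only [policyTransition, of_apply]
    rw [sum_comm]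
    simp only [← mul_sum, hp1, mul_one, hπ1]

theorem sum_abs_policyTransition_sub_le {p : S → A → S → ℝ} (hp0 : ∀ s a s', 0 ≤ p s a s')
    (hp1 : ∀ s a, ∑ s', p s a s' = 1) (π π' : S → A → ℝ) (s : S) :
    ∑ s', |policyTransition p π s s' - policyTransition p π' s s'| ≤ ∑ a, |π s a - π' s a| := by
  refine (sum_abs_vecMul_le (π s - π' s) (of (p s))).trans_eq' ?_ |>.trans_eq ?_
  · simp only [policyTransition, of_apply, vecMul, dotProduct, Pi.sub_apply, sub_mul,
      sum_sub_distrib]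
  · simp only [of_apply, abs_of_nonneg (hp0 _ _ _), hp1, mul_one, Pi.sub_apply]

end PolicyTransition

theorem visitation_expectation_shift_bound_general
    {S A : Type*} [Fintype S] [Fintype A] [Nonempty S]
    -- transition kernel
    (p : S → A → S → ℝ)
    (hp0 : ∀ s a s', 0 ≤ p s a s') (hp1 : ∀ s a, ∑ s', p s a s' = 1)
    -- discount factor
    (γ : ℝ) (hγ0 : 0 ≤ γ) (hγ1 : γ < 1)
    -- initial state distribution
    (d0 : S → ℝ) (hd00 : ∀ s, 0 ≤ d0 s)
    -- the two policies
    (π π' : S → A → ℝ)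
    (hπ0 : ∀ s a, 0 ≤ π s a) (hπ1 : ∀ s, ∑ a, π s a = 1)
    (hπ'0 : ∀ s a, 0 ≤ π' s a) (hπ'1 : ∀ s, ∑ a, π' s a = 1)
    -- discounted visitation frequencies of π and π'
    (ρ ρ' : S → ℝ)
    (hρ : ∀ s', ρ s' = d0 s' + γ * ∑ s, ρ s * (∑ a, π s a * p s a s'))
    (hρ' : ∀ s', ρ' s' = d0 s' + γ * ∑ s, ρ' s * (∑ a, π' s a * p s a s'))
    -- an arbitrary function on states
    (f : S → ℝ) :
    |(∑ s, ρ s * f s) - ∑ s, ρ' s * f s|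
      ≤ (2 * γ / (1 - γ)) * (univ.sup' univ_nonempty fun s => |f s|)
          * ∑ s, ρ' s * ((1 / 2) * ∑ a, |π s a - π' s a|) := by
  classical
  set fmax := univ.sup' univ_nonempty fun s => |f s|
  have hf : ∀ s, |f s| ≤ fmax := fun s => le_sup' (fun s => |f s|) (mem_univ s)
  have hP := policyTransition_mem_rowStochastic hp0 hp1 hπ0 hπ1
  have hP' := policyTransition_mem_rowStochastic hp0 hp1 hπ'0 hπ'1
  have hρ'0 := nonneg_of_eq_add_mul_vecMul hP' hd00 hγ0 hγ1 hρ'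
  have hL1 := sum_abs_sub_le_of_eq_add_mul_vecMul hP hρ'0 hγ0 hγ1 hρ hρ'
  have hTV : ∑ s, ρ' s * ∑ s', |policyTransition p π s s' - policyTransition p π' s s'|
      ≤ ∑ s, ρ' s * ∑ a, |π s a - π' s a| := by
    gcongr with s
    exacts [hρ'0 s, sum_abs_policyTransition_sub_le hp0 hp1 π π' s]
  have hγ : 0 ≤ γ / (1 - γ) := div_nonneg hγ0 (sub_nonneg.2 hγ1.le)
  calc |(∑ s, ρ s * f s) - ∑ s, ρ' s * f s| = |(ρ - ρ') ⬝ᵥ f| := by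
        simp only [dotProduct, Pi.sub_apply, sub_mul, sum_sub_distrib]
    _ ≤ (∑ s, |ρ s - ρ' s|) * fmax := abs_dotProduct_le_sum_abs_mul hf
    _ ≤ γ / (1 - γ) * (∑ s, ρ' s * ∑ a, |π s a - π' s a|) * fmax := by
        gcongr
        · exact (abs_nonneg _).trans (hf (Classical.arbitrary S))
        · exact hL1.trans (mul_le_mul_of_nonneg_left hTV hγ)
    _ = _ := by
        simp only [mul_left_comm _ (1 / 2 : ℝ), ← mul_sum]
        ring

/-- Expectation-shift bound between discounted visitation frequencies:
`|Σ_s ρ_π(s) f(s) − Σ_s ρ_{π'}(s) f(s)|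
  ≤ (2γ/(1−γ)) · max_s |f(s)| · Σ_s ρ_{π'}(s) · D_TV(π‖π')[s]`. -/
theorem visitation_expectation_shift_bound
    {S A : Type*} [Fintype S] [Fintype A] [Nonempty S] [Nonempty A]
    -- transition kernel
    (p : S → A → S → ℝ)
    (hp0 : ∀ s a s', 0 ≤ p s a s') (hp1 : ∀ s a, ∑ s', p s a s' = 1)
    -- discount factor
    (γ : ℝ) (hγ0 : 0 ≤ γ) (hγ1 : γ < 1)
    -- initial state distribution
    (d0 : S → ℝ) (hd00 : ∀ s, 0 ≤ d0 s) (hd01 : ∑ s, d0 s = 1)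
    -- the two policies
    (π π' : S → A → ℝ)
    (hπ0 : ∀ s a, 0 ≤ π s a) (hπ1 : ∀ s, ∑ a, π s a = 1)
    (hπ'0 : ∀ s a, 0 ≤ π' s a) (hπ'1 : ∀ s, ∑ a, π' s a = 1)
    -- discounted visitation frequencies of π and π'
    (ρ ρ' : S → ℝ)
    (hρ : ∀ s', ρ s' = d0 s' + γ * ∑ s, ρ s * (∑ a, π s a * p s a s'))
    (hρ' : ∀ s', ρ' s' = d0 s' + γ * ∑ s, ρ' s * (∑ a, π' s a * p s a s'))
    -- an arbitrary function on states
    (f : S → ℝ) :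
    |(∑ s, ρ s * f s) - ∑ s, ρ' s * f s|
      ≤ (2 * γ / (1 - γ)) * (univ.sup' univ_nonempty fun s => |f s|)
          * ∑ s, ρ' s * ((1 / 2) * ∑ a, |π s a - π' s a|) :=
  visitation_expectation_shift_bound_general p hp0 hp1 γ hγ0 hγ1 d0 hd00 π π' hπ0 hπ1 hπ'0 hπ'1 ρ ρ'
    hρ hρ' f
end

section
/- (Theorem 4, advantage replacement error bound.) Suppose the reward depends only on the state and |r(s)| ≤ R_max for all s. Let π, π_k and π_β be policies, and let Δ = max_s Σ_{s'} ρ_{π_β}^{(s)}(s') D_TV(π_k‖π_β)[s'], where ρ_{π_β}^{(s)} is the discounted visitation frequency of π_β started from s. Then for every probability mass function ρ on S, |Σ_s ρ(s) Σ_a π(a|s) (A_{π_k}(s,a) − A_{π_β}(s,a))| ≤ (2γ(γ+1)/(1−γ)) · R_max · Δ. -/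
/-!
Write `D = V_{π_k} - V_{π_β}`. Subtracting the two Bellman equations gives
`D - γ P_{π_β} D = γ (P_{π_k} - P_{π_β}) V_{π_k}`, and the right-hand side is bounded at `s` by
`2γ R_max / (1 - γ) · D_TV(π_k‖π_β)[s]`, since `|V_{π_k}| ≤ R_max / (1 - γ)`. Applying the
nonnegative resolvent `ρ_{π_β}^{(s)}` of `γ P_{π_β}` recovers `D(s)`, so `|D| ≤ 2γ R_max Δ / (1 - γ)`.
Finally, the reward cancels in the difference of advantages, which equals
`γ Σ_{s'} p(s'|s,a) D(s') - D(s)` and is therefore at most `(γ + 1)` times that bound.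
-/

open Finset

theorem abs_sum_mul_le_of_sum_eq_one {ι : Type*} [Fintype ι] {w f : ι → ℝ} {M : ℝ}
    (hw0 : ∀ i, 0 ≤ w i) (hw1 : ∑ i, w i = 1) (hf : ∀ i, |f i| ≤ M) :
    |∑ i, w i * f i| ≤ M :=
  calc |∑ i, w i * f i| ≤ ∑ i, |w i * f i| := abs_sum_le_sum_abs _ _
    _ = ∑ i, w i * |f i| := sum_congr rfl fun i _ => by rw [abs_mul, abs_of_nonneg (hw0 i)]
    _ ≤ ∑ i, w i * M := sum_le_sum fun i _ => mul_le_mul_of_nonneg_left (hf i) (hw0 i)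
    _ = M := by rw [← sum_mul, hw1, one_mul]

section Kernel

variable {S : Type*} [Fintype S] {P : S → S → ℝ} {γ : ℝ}

theorem abs_le_of_bellman (hP0 : ∀ s u, 0 ≤ P s u) (hP1 : ∀ s, ∑ u, P s u = 1)
    (hγ0 : 0 ≤ γ) (hγ1 : γ < 1) {r V : S → ℝ} {R : ℝ} (hr : ∀ s, |r s| ≤ R)
    (hV : ∀ s, V s = r s + γ * ∑ u, P s u * V u) (s : S) :
    |V s| ≤ R / (1 - γ) := by
  obtain ⟨s₀, -, hs₀⟩ := exists_max_image univ (fun s => |V s|) ⟨s, mem_univ s⟩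
  have hmax : ∀ u, |V u| ≤ |V s₀| := fun u => hs₀ u (mem_univ u)
  have hfix : |V s₀| ≤ R + γ * |V s₀| :=
    calc |V s₀| ≤ |r s₀| + |γ * ∑ u, P s₀ u * V u| := by rw [hV s₀]; exact abs_add_le _ _
      _ ≤ R + γ * |V s₀| := by
        rw [abs_mul, abs_of_nonneg hγ0]
        exact add_le_add (hr s₀)
          (mul_le_mul_of_nonneg_left (abs_sum_mul_le_of_sum_eq_one (hP0 s₀) (hP1 s₀) hmax) hγ0)
  rw [le_div_iff₀ (by linarith)]
  nlinarith [hmax s]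

/-- The solution of `ρ = b + γ ρ P` with `b ≥ 0` is nonnegative: the total mass `m` of its
negative part satisfies `m ≤ γ m`. -/
theorem nonneg_of_eq_add_mul_sum (hP0 : ∀ s u, 0 ≤ P s u) (hP1 : ∀ s, ∑ u, P s u = 1)
    (hγ0 : 0 ≤ γ) (hγ1 : γ < 1) {b ρ : S → ℝ} (hb : ∀ u, 0 ≤ b u)
    (hρ : ∀ u, ρ u = b u + γ * ∑ v, ρ v * P v u) (u : S) : 0 ≤ ρ u := by
  set τ : S → ℝ := fun u => max (-ρ u) 0
  have hτ0 : ∀ u, 0 ≤ τ u := fun u => le_max_right _ _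
  have hτ : ∀ u, τ u ≤ γ * ∑ v, τ v * P v u := by
    intro u
    refine max_le ?_ (mul_nonneg hγ0 (sum_nonneg fun v _ => mul_nonneg (hτ0 v) (hP0 v u)))
    have hneg : ∑ v, -(ρ v * P v u) ≤ ∑ v, τ v * P v u :=
      sum_le_sum fun v _ => by
        rw [neg_mul_eq_neg_mul]; exact mul_le_mul_of_nonneg_right (le_max_left _ _) (hP0 v u)
    rw [sum_neg_distrib] at hneg
    nlinarith [hρ u, hb u]
  have hmass : ∑ u, τ u ≤ γ * ∑ u, τ u :=
    calc ∑ u, τ u ≤ ∑ u, γ * ∑ v, τ v * P v u := sum_le_sum fun u _ => hτ u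
      _ = γ * ∑ u, τ u := by
        simp only [← mul_sum]
        rw [sum_comm]
        simp only [← mul_sum, hP1, mul_one]
  have hzero : ∑ u, τ u = 0 := by
    nlinarith [sum_nonneg fun u (_ : u ∈ univ) => hτ0 u]
  have hτu : τ u = 0 := (sum_eq_zero_iff_of_nonneg fun u _ => hτ0 u).mp hzero u (mem_univ u)
  linarith [le_max_left (-ρ u) 0]

/-- `ρ` is the row of `s` of the resolvent `(I - γ P)⁻¹`, so it inverts `I - γ P` at `s`. -/
theorem eq_sum_mul_sub_of_resolvent [DecidableEq S] {s : S} {ρ : S → ℝ}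
    (hρ : ∀ u, ρ u = (if u = s then 1 else 0) + γ * ∑ v, ρ v * P v u) (f : S → ℝ) :
    f s = ∑ u, ρ u * (f u - γ * ∑ v, P u v * f v) := by
  have hδ : ∀ v, ρ v - γ * ∑ u, ρ u * P u v = if v = s then 1 else 0 := fun v => by
    linarith [hρ v]
  calc f s = ∑ v, (if v = s then 1 else 0) * f v := by simp
    _ = ∑ v, (ρ v - γ * ∑ u, ρ u * P u v) * f v := by simp only [hδ]
    _ = ∑ u, ρ u * (f u - γ * ∑ v, P u v * f v) := by
      simp only [sub_mul, mul_sub, sum_sub_distrib, sum_mul, mul_sum]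
      rw [sum_comm (f := fun v u => γ * (ρ u * P u v) * f v)]
      congr 1
      exact sum_congr rfl fun u _ => sum_congr rfl fun v _ => by ring

end Kernel

section Policy

variable {S A : Type*} [Fintype A]

def policyKernel (p : S → A → S → ℝ) (π : S → A → ℝ) (s u : S) : ℝ :=
  ∑ a, π s a * p s a u

noncomputable def tvDist (π π' : S → A → ℝ) (s : S) : ℝ :=
  (1 / 2) * ∑ a, |π s a - π' s a|

variable {p : S → A → S → ℝ} {π π' : S → A → ℝ}

theorem policyKernel_nonneg (hp0 : ∀ s a u, 0 ≤ p s a u) (hπ0 : ∀ s a, 0 ≤ π s a) (s u : S) :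
    0 ≤ policyKernel p π s u :=
  sum_nonneg fun a _ => mul_nonneg (hπ0 s a) (hp0 s a u)

variable [Fintype S]

theorem sum_policyKernel (hp1 : ∀ s a, ∑ u, p s a u = 1) (hπ1 : ∀ s, ∑ a, π s a = 1) (s : S) :
    ∑ u, policyKernel p π s u = 1 := by
  simp only [policyKernel]
  rw [sum_comm]
  simp only [← mul_sum, hp1, mul_one, hπ1]

theorem abs_sum_policyKernel_sub_mul_le (hp0 : ∀ s a u, 0 ≤ p s a u)
    (hp1 : ∀ s a, ∑ u, p s a u = 1) {f : S → ℝ} {M : ℝ} (hf : ∀ u, |f u| ≤ M) (s : S) :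
    |∑ u, (policyKernel p π s u - policyKernel p π' s u) * f u| ≤ 2 * M * tvDist π π' s := by
  have hsplit : ∑ u, (policyKernel p π s u - policyKernel p π' s u) * f u
      = ∑ a, (π s a - π' s a) * ∑ u, p s a u * f u := by
    simp only [policyKernel, ← sum_sub_distrib, sum_mul, mul_sum]
    rw [sum_comm]
    exact sum_congr rfl fun a _ => sum_congr rfl fun u _ => by ring
  rw [hsplit, tvDist]
  calc |∑ a, (π s a - π' s a) * ∑ u, p s a u * f u|
        ≤ ∑ a, |(π s a - π' s a) * ∑ u, p s a u * f u| := abs_sum_le_sum_abs _ _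
      _ ≤ ∑ a, |π s a - π' s a| * M := sum_le_sum fun a _ => by
          rw [abs_mul]
          exact mul_le_mul_of_nonneg_left
            (abs_sum_mul_le_of_sum_eq_one (hp0 s a) (hp1 s a) hf) (abs_nonneg _)
      _ = 2 * M * ((1 / 2) * ∑ a, |π s a - π' s a|) := by rw [← sum_mul]; ring

theorem abs_value_sub_le [DecidableEq S] (hp0 : ∀ s a u, 0 ≤ p s a u)
    (hp1 : ∀ s a, ∑ u, p s a u = 1) {γ : ℝ} (hγ0 : 0 ≤ γ) (hγ1 : γ < 1)
    {r : S → ℝ} {R : ℝ} (hr : ∀ s, |r s| ≤ R)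
    (hπ0 : ∀ s a, 0 ≤ π s a) (hπ1 : ∀ s, ∑ a, π s a = 1) {V V' : S → ℝ}
    (hV : ∀ s, V s = r s + γ * ∑ u, policyKernel p π s u * V u)
    (hV' : ∀ s, V' s = r s + γ * ∑ u, policyKernel p π' s u * V' u)
    {s : S} {ρ : S → ℝ} (hρ0 : ∀ u, 0 ≤ ρ u)
    (hρ : ∀ u, ρ u = (if u = s then 1 else 0) + γ * ∑ v, ρ v * policyKernel p π' v u) :
    |V s - V' s| ≤ 2 * γ * R / (1 - γ) * ∑ u, ρ u * tvDist π π' u := by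
  have hVbound : ∀ u, |V u| ≤ R / (1 - γ) :=
    abs_le_of_bellman (policyKernel_nonneg hp0 hπ0) (sum_policyKernel hp1 hπ1) hγ0 hγ1 hr hV
  have hsource : ∀ u, |(V u - V' u) - γ * ∑ v, policyKernel p π' u v * (V v - V' v)|
      ≤ 2 * γ * R / (1 - γ) * tvDist π π' u := by
    intro u
    have hdiff : (V u - V' u) - γ * ∑ v, policyKernel p π' u v * (V v - V' v)
        = γ * ∑ v, (policyKernel p π u v - policyKernel p π' u v) * V v := by
      simp only [mul_sub, sub_mul, sum_sub_distrib]
      linear_combination hV u - hV' u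
    rw [hdiff, abs_mul, abs_of_nonneg hγ0]
    calc γ * |∑ v, (policyKernel p π u v - policyKernel p π' u v) * V v|
        ≤ γ * (2 * (R / (1 - γ)) * tvDist π π' u) :=
          mul_le_mul_of_nonneg_left (abs_sum_policyKernel_sub_mul_le hp0 hp1 hVbound u) hγ0
      _ = 2 * γ * R / (1 - γ) * tvDist π π' u := by ring
  rw [eq_sum_mul_sub_of_resolvent hρ (fun u => V u - V' u), mul_sum]
  calc _ ≤ ∑ u, |ρ u * ((V u - V' u) - γ * ∑ v, policyKernel p π' u v * (V v - V' v))| :=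
        abs_sum_le_sum_abs _ _
    _ ≤ ∑ u, ρ u * (2 * γ * R / (1 - γ) * tvDist π π' u) := sum_le_sum fun u _ => by
        rw [abs_mul, abs_of_nonneg (hρ0 u)]
        exact mul_le_mul_of_nonneg_left (hsource u) (hρ0 u)
    _ = _ := sum_congr rfl fun u _ => by ring

theorem abs_sum_advantage_sub_le (hp0 : ∀ s a u, 0 ≤ p s a u)
    (hp1 : ∀ s a, ∑ u, p s a u = 1) (hπ0 : ∀ s a, 0 ≤ π s a) (hπ1 : ∀ s, ∑ a, π s a = 1)
    {γ : ℝ} (hγ0 : 0 ≤ γ) (r : S → ℝ) {V V' : S → ℝ} {B : ℝ} (hB : ∀ u, |V u - V' u| ≤ B)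
    (s : S) :
    |∑ a, π s a * (((r s + γ * ∑ u, p s a u * V u) - V s)
        - ((r s + γ * ∑ u, p s a u * V' u) - V' s))| ≤ (γ + 1) * B := by
  refine abs_sum_mul_le_of_sum_eq_one (hπ0 s) (hπ1 s) fun a => ?_
  have hcancel : ((r s + γ * ∑ u, p s a u * V u) - V s) - ((r s + γ * ∑ u, p s a u * V' u) - V' s)
      = γ * ∑ u, p s a u * (V u - V' u) - (V s - V' s) := by
    simp only [mul_sub, sum_sub_distrib]; ring
  rw [hcancel]
  calc _ ≤ |γ * ∑ u, p s a u * (V u - V' u)| + |V s - V' s| := abs_sub _ _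
    _ ≤ γ * B + B := by
        rw [abs_mul, abs_of_nonneg hγ0]
        gcongr
        · exact abs_sum_mul_le_of_sum_eq_one (hp0 s a) (hp1 s a) hB
        · exact hB s
    _ = (γ + 1) * B := by ring

end Policy

theorem advantage_replacement_bound_general
    {S A : Type*} [Fintype S] [DecidableEq S] [Fintype A] [Nonempty S]
    -- transition kernel
    (p : S → A → S → ℝ)
    (hp0 : ∀ s a s', 0 ≤ p s a s') (hp1 : ∀ s a, ∑ s', p s a s' = 1)
    -- discount factor
    (γ : ℝ) (hγ0 : 0 ≤ γ) (hγ1 : γ < 1)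
    -- state-only bounded reward
    (r : S → ℝ) (Rmax : ℝ) (hr : ∀ s, |r s| ≤ Rmax)
    -- policies π, π_k, π_β
    (π πk πβ : S → A → ℝ)
    (hπ0 : ∀ s a, 0 ≤ π s a) (hπ1 : ∀ s, ∑ a, π s a = 1)
    (hπk0 : ∀ s a, 0 ≤ πk s a) (hπk1 : ∀ s, ∑ a, πk s a = 1)
    (hπβ0 : ∀ s a, 0 ≤ πβ s a) (hπβ1 : ∀ s, ∑ a, πβ s a = 1)
    -- value functions of π_k and π_β (Bellman equations, state-only reward)
    (Vk Vβ : S → ℝ)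
    (hVk : ∀ s, Vk s = r s + γ * ∑ s', (∑ a, πk s a * p s a s') * Vk s')
    (hVβ : ∀ s, Vβ s = r s + γ * ∑ s', (∑ a, πβ s a * p s a s') * Vβ s')
    -- discounted visitation frequency of π_β started from each state
    (ρβ : S → S → ℝ)
    (hρβ : ∀ s u, ρβ s u = (if u = s then (1 : ℝ) else 0)
            + γ * ∑ s'', ρβ s s'' * (∑ a, πβ s'' a * p s'' a u))
    -- an arbitrary probability mass function on states
    (ρ : S → ℝ) (hρ0 : ∀ s, 0 ≤ ρ s) (hρ1 : ∑ s, ρ s = 1) :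
    |∑ s, ρ s * ∑ a, π s a *
        (((r s + γ * ∑ s', p s a s' * Vk s') - Vk s)
          - ((r s + γ * ∑ s', p s a s' * Vβ s') - Vβ s))|
      ≤ (2 * γ * (γ + 1) / (1 - γ)) * Rmax
          * (univ.sup' univ_nonempty fun s =>
              ∑ s', ρβ s s' * ((1 / 2) * ∑ a, |πk s' a - πβ s' a|)) := by
  have hRmax : 0 ≤ Rmax := (abs_nonneg _).trans (hr (Classical.arbitrary S))
  have hρβ0 : ∀ s u, 0 ≤ ρβ s u := fun s =>
    nonneg_of_eq_add_mul_sum (policyKernel_nonneg hp0 hπβ0) (sum_policyKernel hp1 hπβ1) hγ0 hγ1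
      (b := fun u => if u = s then 1 else 0) (fun u => by positivity) (hρβ s)
  change _ ≤ _ * (univ.sup' univ_nonempty fun s => ∑ s', ρβ s s' * tvDist πk πβ s')
  set Δ := univ.sup' univ_nonempty fun s => ∑ s', ρβ s s' * tvDist πk πβ s'
  have hD : ∀ s, |Vk s - Vβ s| ≤ 2 * γ * Rmax / (1 - γ) * Δ := fun s =>
    (abs_value_sub_le hp0 hp1 hγ0 hγ1 hr hπk0 hπk1 hVk hVβ (hρβ0 s) (hρβ s)).trans <|
      mul_le_mul_of_nonneg_left (le_sup' (fun s => ∑ s', ρβ s s' * tvDist πk πβ s') (mem_univ s))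
        (div_nonneg (by positivity) (by linarith))
  calc _ ≤ (γ + 1) * (2 * γ * Rmax / (1 - γ) * Δ) :=
        abs_sum_mul_le_of_sum_eq_one hρ0 hρ1 (abs_sum_advantage_sub_le hp0 hp1 hπ0 hπ1 hγ0 r hD)
    _ = _ := by ring

/-- Theorem 4: advantage replacement error bound. Replacing `A_{π_k}` by `A_{π_β}`
in the surrogate objective changes it by at most
`(2γ(γ+1)/(1−γ)) · R_max · Δ` where
`Δ = max_s Σ_{s'} ρ_{π_β}^{(s)}(s') D_TV(π_k‖π_β)[s']`. -/
theorem advantage_replacement_bound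
    {S A : Type*} [Fintype S] [DecidableEq S] [Fintype A] [Nonempty S] [Nonempty A]
    -- transition kernel
    (p : S → A → S → ℝ)
    (hp0 : ∀ s a s', 0 ≤ p s a s') (hp1 : ∀ s a, ∑ s', p s a s' = 1)
    -- discount factor
    (γ : ℝ) (hγ0 : 0 ≤ γ) (hγ1 : γ < 1)
    -- state-only bounded reward
    (r : S → ℝ) (Rmax : ℝ) (hr : ∀ s, |r s| ≤ Rmax)
    -- policies π, π_k, π_β
    (π πk πβ : S → A → ℝ)
    (hπ0 : ∀ s a, 0 ≤ π s a) (hπ1 : ∀ s, ∑ a, π s a = 1)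
    (hπk0 : ∀ s a, 0 ≤ πk s a) (hπk1 : ∀ s, ∑ a, πk s a = 1)
    (hπβ0 : ∀ s a, 0 ≤ πβ s a) (hπβ1 : ∀ s, ∑ a, πβ s a = 1)
    -- value functions of π_k and π_β (Bellman equations, state-only reward)
    (Vk Vβ : S → ℝ)
    (hVk : ∀ s, Vk s = r s + γ * ∑ s', (∑ a, πk s a * p s a s') * Vk s')
    (hVβ : ∀ s, Vβ s = r s + γ * ∑ s', (∑ a, πβ s a * p s a s') * Vβ s')
    -- discounted visitation frequency of π_β started from each state
    (ρβ : S → S → ℝ)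
    (hρβ : ∀ s u, ρβ s u = (if u = s then (1 : ℝ) else 0)
            + γ * ∑ s'', ρβ s s'' * (∑ a, πβ s'' a * p s'' a u))
    -- an arbitrary probability mass function on states
    (ρ : S → ℝ) (hρ0 : ∀ s, 0 ≤ ρ s) (hρ1 : ∑ s, ρ s = 1) :
    |∑ s, ρ s * ∑ a, π s a *
        (((r s + γ * ∑ s', p s a s' * Vk s') - Vk s)
          - ((r s + γ * ∑ s', p s a s' * Vβ s') - Vβ s))|
      ≤ (2 * γ * (γ + 1) / (1 - γ)) * Rmax
          * (univ.sup' univ_nonempty fun s =>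
              ∑ s', ρβ s s' * ((1 / 2) * ∑ a, |πk s' a - πβ s' a|)) :=
  advantage_replacement_bound_general p hp0 hp1 γ hγ0 hγ1 r Rmax hr π πk πβ hπ0 hπ1 hπk0 hπk1 hπβ0
    hπβ1 Vk Vβ hVk hVβ ρβ hρβ ρ hρ0 hρ1
end
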